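/- For any bipartite density operator ρ_AB on H_A ⊗ H_B, C_{l1}(ρ_AB) ≥ C^{A|B}_{l1}(ρ_AB) + C_{l1}(ρ_B), where ρ_B = Tr_A ρ_AB. -/

import Mathlib

open scoped BigOperators ComplexOrder Kronecker

/-- The square root of a positive semidefinite matrix, as `Matrix.PosSemidef.sqrt` was defined
in the older Mathlib (removed since). -/
noncomputable def posSemidefSqrt {n : Type*} [Fintype n] [DecidableEq n] {M : Matrix n n ℂ}
    (hM : M.PosSemidef) : Matrix n n ℂ :=
  hM.1.eigenvectorUnitary.1 * Matrix.diagonal ((↑) ∘ (√·) ∘ hM.1.eigenvalues) *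
    (star hM.1.eigenvectorUnitary : Matrix n n ℂ)

/-- Trace norm: `‖P‖_tr = Tr √(Pᴴ P)`. -/
noncomputable def traceNorm {n : Type*} [Fintype n] [DecidableEq n] (P : Matrix n n ℂ) : ℝ :=
  ((posSemidefSqrt (Matrix.posSemidef_conjTranspose_mul_self P)).trace).re

/-- The B-blocks of an operator on H_A ⊗ H_B. -/
def blockB {A B : Type*} (Q : Matrix (A × B) (A × B) ℂ) (i j : A) : Matrix B B ℂ :=
  fun b b' => Q (i, b) (j, b')

/-- l1 norm of IQ coherence: C^{A|B}_{l1}(ρ) = Σ_{i≠j} ‖ρ^B_{ij}‖_tr. -/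
noncomputable def CIQl1 {A B : Type*} [Fintype A] [Fintype B] [DecidableEq A] [DecidableEq B]
    (ρ : Matrix (A × B) (A × B) ℂ) : ℝ :=
  ∑ i, ∑ j, if i = j then 0 else traceNorm (blockB ρ i j)

/-- l1 norm of coherence: sum of absolute values of off-diagonal entries. -/
noncomputable def Cl1 {n : Type*} [Fintype n] [DecidableEq n] (σ : Matrix n n ℂ) : ℝ :=
  ∑ p, ∑ q, if p = q then 0 else ‖σ p q‖

/-!
Decompose ρ into its B-blocks ρ^B_{ij}. The off-diagonal entries of ρ lying in a block with
i ≠ j add up to the entrywise l1 norm of ρ^B_{ij}, which dominates its trace norm; those lying in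
the diagonal blocks add up to Σ_i C_{l1}(ρ^B_{ii}), which dominates C_{l1}(ρ_B) by the triangle
inequality, since ρ_B = Σ_i ρ^B_{ii}.

The trace-norm bound is a duality argument. If (v_k) is an eigenbasis of MᴴM, the vectors M v_k
are pairwise orthogonal with ‖M v_k‖ = √λ_k; normalizing the nonzero ones to u_k gives
‖M‖_tr = Σ_k ⟪u_k, M v_k⟫ = Σ_{b,b'} M_{bb'} Σ_k conj(u_k b) v_k b', and every inner sum has
modulus at most 1 by Cauchy–Schwarz and Bessel's inequality for the orthonormal families (u_k)
and (v_k).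
-/

open Matrix WithLp

section
variable {𝕜 : Type*} [RCLike 𝕜] {m n ι : Type*} [Fintype m] [Fintype n] [Fintype ι]

lemma Orthonormal.sum_norm_sq_apply_le_one {u : ι → EuclideanSpace 𝕜 n} (hu : Orthonormal 𝕜 u)
    (b : n) : ∑ k, ‖u k b‖ ^ 2 ≤ 1 := by
  classical
  simpa [EuclideanSpace.inner_single_right] using
    hu.sum_inner_products_le (EuclideanSpace.single b (1 : 𝕜)) (s := Finset.univ)

lemma Orthonormal.norm_sum_star_mul_le_one {u : ι → EuclideanSpace 𝕜 m}
    {v : ι → EuclideanSpace 𝕜 n} (hu : Orthonormal 𝕜 u) (hv : Orthonormal 𝕜 v) (b : m) (b' : n) :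
    ‖∑ k, star (u k b) * v k b'‖ ≤ 1 :=
  calc ‖∑ k, star (u k b) * v k b'‖ ≤ ∑ k, ‖u k b‖ * ‖v k b'‖ :=
        (norm_sum_le _ _).trans_eq (by simp [norm_mul])
    _ ≤ √(∑ k, ‖u k b‖ ^ 2) * √(∑ k, ‖v k b'‖ ^ 2) := Real.sum_mul_le_sqrt_mul_sqrt _ _ _
    _ ≤ 1 := by
      rw [← Real.sqrt_mul (by positivity)]
      exact Real.sqrt_le_one.mpr <|
        mul_le_one₀ (hu.sum_norm_sq_apply_le_one b) (by positivity) (hv.sum_norm_sq_apply_le_one b')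

lemma norm_sum_inner_mulVec_le (M : Matrix m n 𝕜) {u : ι → EuclideanSpace 𝕜 m}
    {v : ι → EuclideanSpace 𝕜 n} (hu : Orthonormal 𝕜 u) (hv : Orthonormal 𝕜 v) :
    ‖∑ k, inner 𝕜 (u k) (toLp 2 (M *ᵥ v k))‖ ≤ ∑ b, ∑ b', ‖M b b'‖ := by
  have hsum : ∑ k, inner 𝕜 (u k) (toLp 2 (M *ᵥ v k)) =
      ∑ b, ∑ b', M b b' * ∑ k, star (u k b) * v k b' := by
    simp only [PiLp.inner_apply, mulVec, dotProduct, Finset.mul_sum, RCLike.inner_apply]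
    rw [Finset.sum_comm]
    refine Finset.sum_congr rfl fun b _ => ?_
    rw [Finset.sum_comm]
    refine Finset.sum_congr rfl fun b' _ => ?_
    rw [Finset.sum_mul]
    exact Finset.sum_congr rfl fun _ _ => by rw [RCLike.star_def]; ring
  rw [hsum]
  refine (norm_sum_le _ _).trans (Finset.sum_le_sum fun b _ => (norm_sum_le _ _).trans
    (Finset.sum_le_sum fun b' _ => ?_))
  rw [norm_mul]
  exact mul_le_of_le_one_right (norm_nonneg _) (hu.norm_sum_star_mul_le_one hv b b')

lemma sum_norm_mulVec_le_of_pairwise_orthogonal (M : Matrix m n 𝕜) {v : ι → EuclideanSpace 𝕜 n}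
    (hv : Orthonormal 𝕜 v)
    (horth : Pairwise fun k l => inner 𝕜 (toLp 2 (M *ᵥ v k)) (toLp 2 (M *ᵥ v l)) = 0) :
    ∑ k, ‖toLp 2 (M *ᵥ v k)‖ ≤ ∑ b, ∑ b', ‖M b b'‖ := by
  classical
  set w : ι → EuclideanSpace 𝕜 m := fun k => toLp 2 (M *ᵥ v k)
  let u : {k // w k ≠ 0} → EuclideanSpace 𝕜 m := fun k => (‖w k‖⁻¹ : 𝕜) • w k
  have hu : Orthonormal 𝕜 u := by
    refine ⟨fun k => norm_smul_inv_norm k.2, fun k l hkl => ?_⟩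
    have hwkl : inner 𝕜 (w k) (w l) = 0 := horth (Subtype.coe_ne_coe.mpr hkl)
    simp only [u, inner_smul_left, inner_smul_right, hwkl, mul_zero]
  have hnorm : ∀ k : {k // w k ≠ 0}, ‖w k‖ = RCLike.re (inner 𝕜 (u k) (w k)) := fun k => by
    have hk : ‖w k‖ ≠ 0 := norm_ne_zero_iff.mpr k.2
    simp only [u, inner_smul_left, inner_self_eq_norm_sq_to_K, RCLike.conj_inv, RCLike.conj_ofReal]
    norm_cast
    field_simp
  calc ∑ k, ‖w k‖ = ∑ k : {k // w k ≠ 0}, ‖w k‖ := by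
        rw [← Finset.sum_filter_of_ne (p := fun k => w k ≠ 0) fun k _ h => norm_ne_zero_iff.mp h]
        exact Finset.sum_subtype _ (fun k => by simp) _
    _ = RCLike.re (∑ k, inner 𝕜 (u k) (w k)) := by simp only [hnorm, map_sum]
    _ ≤ ‖∑ k, inner 𝕜 (u k) (w k)‖ := RCLike.re_le_norm _
    _ ≤ ∑ b, ∑ b', ‖M b b'‖ :=
        norm_sum_inner_mulVec_le M hu (hv.comp _ Subtype.val_injective)

lemma inner_mulVec_mulVec (M : Matrix m n 𝕜) (x y : EuclideanSpace 𝕜 n) :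
    inner 𝕜 (toLp 2 (M *ᵥ x)) (toLp 2 (M *ᵥ y)) = inner 𝕜 x (toLp 2 ((Mᴴ * M) *ᵥ y)) := by
  rw [EuclideanSpace.inner_eq_star_dotProduct, EuclideanSpace.inner_eq_star_dotProduct,
    ofLp_toLp, ofLp_toLp, star_mulVec, dotProduct_comm, ← dotProduct_mulVec, mulVec_mulVec,
    dotProduct_comm]

end

section
variable {𝕜 : Type*} [RCLike 𝕜] {m n : Type*} [Fintype m] [Fintype n] [DecidableEq n]

lemma inner_mulVec_eigenvectorBasis (M : Matrix m n 𝕜) (hH : (Mᴴ * M).IsHermitian) (k l : n) :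
    inner 𝕜 (toLp 2 (M *ᵥ hH.eigenvectorBasis k)) (toLp 2 (M *ᵥ hH.eigenvectorBasis l)) =
      if k = l then (hH.eigenvalues k : 𝕜) else 0 := by
  have hv := orthonormal_iff_ite.mp hH.eigenvectorBasis.orthonormal k l
  rw [inner_mulVec_mulVec, hH.mulVec_eigenvectorBasis, WithLp.toLp_smul, toLp_ofLp,
    RCLike.real_smul_eq_coe_smul (K := 𝕜), inner_smul_right, hv]
  split_ifs with hkl
  · rw [hkl, mul_one]
  · rw [mul_zero]

lemma norm_mulVec_eigenvectorBasis (M : Matrix m n 𝕜) (hH : (Mᴴ * M).IsHermitian) (k : n) :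
    ‖toLp 2 (M *ᵥ hH.eigenvectorBasis k)‖ = √(hH.eigenvalues k) := by
  have h := inner_mulVec_eigenvectorBasis M hH k k
  rw [if_pos rfl, inner_self_eq_norm_sq_to_K] at h
  rw [← Real.sqrt_sq (norm_nonneg _)]
  exact congrArg Real.sqrt (by exact_mod_cast h)

end

section
variable {n : Type*} [Fintype n] [DecidableEq n]

lemma trace_posSemidefSqrt {M : Matrix n n ℂ} (hM : M.PosSemidef) :
    (posSemidefSqrt hM).trace = ∑ k, (√(hM.1.eigenvalues k) : ℂ) := by
  rw [posSemidefSqrt, trace_mul_comm, ← mul_assoc, Unitary.coe_star_mul_self, one_mul,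
    trace_diagonal]
  rfl

lemma traceNorm_le_sum_norm (M : Matrix n n ℂ) : traceNorm M ≤ ∑ b, ∑ b', ‖M b b'‖ := by
  have hH := (posSemidef_conjTranspose_mul_self M).1
  have htr : traceNorm M = ∑ k, ‖toLp 2 (M *ᵥ hH.eigenvectorBasis k)‖ := by
    simp [traceNorm, trace_posSemidefSqrt, norm_mulVec_eigenvectorBasis, Complex.re_sum]
  rw [htr]
  exact sum_norm_mulVec_le_of_pairwise_orthogonal M hH.eigenvectorBasis.orthonormal
    fun k l hkl => (inner_mulVec_eigenvectorBasis M hH k l).trans (if_neg hkl)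

lemma Cl1_add_le (σ τ : Matrix n n ℂ) : Cl1 (σ + τ) ≤ Cl1 σ + Cl1 τ := by
  simp only [Cl1, ← Finset.sum_add_distrib]
  gcongr with p _ q _
  split_ifs
  · simp
  · exact norm_add_le _ _

lemma Cl1_sum_le {ι : Type*} (s : Finset ι) (σ : ι → Matrix n n ℂ) :
    Cl1 (∑ i ∈ s, σ i) ≤ ∑ i ∈ s, Cl1 (σ i) :=
  Finset.le_sum_of_subadditive Cl1 (by simp [Cl1]) Cl1_add_le s σ

end

lemma Cl1_eq_sum_blockB {A B : Type*} [Fintype A] [Fintype B] [DecidableEq A] [DecidableEq B]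
    (Q : Matrix (A × B) (A × B) ℂ) :
    Cl1 Q = ∑ i, ∑ j, if i = j then Cl1 (blockB Q i i) else ∑ b, ∑ b', ‖blockB Q i j b b'‖ := by
  simp only [Cl1, Fintype.sum_prod_type, blockB]
  refine Finset.sum_congr rfl fun i _ => ?_
  rw [Finset.sum_comm]
  refine Finset.sum_congr rfl fun j _ => ?_
  split_ifs with h
  · subst h; simp [Prod.ext_iff]
  · simp [h]

theorem Cl1_ge_CIQl1_add_local_general {A B : Type*} [Fintype A] [Fintype B] [DecidableEq A]
    [DecidableEq B] (ρ : Matrix (A × B) (A × B) ℂ) :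
    Cl1 ρ ≥ CIQl1 ρ + Cl1 (fun b b' => ∑ i, ρ (i, b) (i, b')) := by
  have hρB : (fun b b' => ∑ i, ρ (i, b) (i, b')) = ∑ i, blockB ρ i i := by
    ext b b'; simp [blockB, Matrix.sum_apply]
  calc CIQl1 ρ + Cl1 (fun b b' => ∑ i, ρ (i, b) (i, b'))
      ≤ CIQl1 ρ + ∑ i, Cl1 (blockB ρ i i) := by
        rw [hρB]; gcongr; exact Cl1_sum_le _ _
    _ = ∑ i, ∑ j, if i = j then Cl1 (blockB ρ i i) else traceNorm (blockB ρ i j) := by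
        simp only [CIQl1, ← Finset.sum_add_distrib]
        refine Finset.sum_congr rfl fun i _ => ?_
        simp only [Finset.sum_ite, Finset.filter_eq, Finset.filter_ne, Finset.mem_univ, if_true,
          Finset.sum_const_zero, Finset.sum_singleton]
        ring
    _ ≤ Cl1 ρ := by
        rw [Cl1_eq_sum_blockB]
        gcongr with i _ j _
        split_ifs
        · exact le_rfl
        · exact traceNorm_le_sum_norm _

/-- C_{l1}(ρ_AB) ≥ C^{A|B}_{l1}(ρ_AB) + C_{l1}(ρ_B), with ρ_B = Tr_A ρ_AB. -/
theorem Cl1_ge_CIQl1_add_local {A B : Type*} [Fintype A] [Fintype B] [DecidableEq A]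
    [DecidableEq B] (ρ : Matrix (A × B) (A × B) ℂ) (hρ : ρ.PosSemidef) (hTr : ρ.trace = 1) :
    Cl1 ρ ≥ CIQl1 ρ + Cl1 (fun b b' => ∑ i, ρ (i, b) (i, b')) :=
  Cl1_ge_CIQl1_add_local_general ρ
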